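/- For any x ∈ ℝ × ℝ^{n-1}, the metric projection of 2x onto the second-order cone satisfies P_{K^n}(2x) = x + |x|, where |·| is the SOC absolute value. -/

import Mathlib

open scoped Classical RealInnerProductSpace

noncomputable section

/-- The "tail" `x₂ ∈ ℝ^{n-1}` of a vector `x = (x₁, x₂) ∈ ℝ × ℝ^{n-1}`,
modelled as `x ∈ ℝ^{n}` via `EuclideanSpace ℝ (Fin (n+1))`. -/
def socTail {n : ℕ} (x : EuclideanSpace ℝ (Fin (n + 1))) : EuclideanSpace ℝ (Fin n) :=
  WithLp.toLp 2 fun i => x i.succ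

/-- The second-order cone `K = {(x₁, x₂) ∈ ℝ × ℝ^{n-1} : ‖x₂‖ ≤ x₁}`. -/
def soc (n : ℕ) : Set (EuclideanSpace ℝ (Fin (n + 1))) :=
  {x | ‖socTail x‖ ≤ x 0}

/-- The SOC absolute value `|x|`. -/
def socAbs {n : ℕ} (x : EuclideanSpace ℝ (Fin (n + 1))) :
    EuclideanSpace ℝ (Fin (n + 1)) :=
  if socTail x = 0 then
    (WithLp.toLp 2 fun i => if i = 0 then |x 0| else 0)
  else
    (WithLp.toLp 2 fun i =>
      if i = 0 then (|x 0 - ‖socTail x‖| + |x 0 + ‖socTail x‖|) / 2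
      else ((|x 0 + ‖socTail x‖| - |x 0 - ‖socTail x‖|) / 2) * (x i / ‖socTail x‖))

lemma inner_split {n : ℕ} (u v : EuclideanSpace ℝ (Fin (n + 1))) :
    ⟪u, v⟫ = u 0 * v 0 + ⟪socTail u, socTail v⟫ := by
  simp [PiLp.inner_apply, RCLike.inner_apply, Fin.sum_univ_succ, socTail]; ring

lemma norm_sq_split {n : ℕ} (u : EuclideanSpace ℝ (Fin (n + 1))) :
    ‖u‖ ^ 2 = (u 0) ^ 2 + ‖socTail u‖ ^ 2 := by
  have h := inner_split u u
  rw [real_inner_self_eq_norm_sq, real_inner_self_eq_norm_sq] at h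
  rw [h]; ring

lemma soc_selfdual {n : ℕ} {u v : EuclideanSpace ℝ (Fin (n + 1))}
    (hu : u ∈ soc n) (hv : v ∈ soc n) : 0 ≤ ⟪u, v⟫ := by
  rw [inner_split]
  have hu' : ‖socTail u‖ ≤ u 0 := hu
  have hv' : ‖socTail v‖ ≤ v 0 := hv
  have h1 := abs_real_inner_le_norm (socTail u) (socTail v)
  have h2 := neg_abs_le (⟪socTail u, socTail v⟫)
  have hnu := norm_nonneg (socTail u)
  have hnv := norm_nonneg (socTail v)
  have hprod : ‖socTail u‖ * ‖socTail v‖ ≤ u 0 * v 0 :=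
    mul_le_mul hu' hv' hnv (hnu.trans hu')
  linarith

lemma soc_convex (n : ℕ) : Convex ℝ (soc n) := by
  intro u hu v hv a b ha hb hab
  show ‖socTail (a • u + b • v)‖ ≤ (a • u + b • v) 0
  have he : socTail (a • u + b • v) = a • socTail u + b • socTail v := by
    ext i; simp [socTail]
  have h0 : (a • u + b • v) 0 = a * u 0 + b * v 0 := rfl
  rw [he, h0]
  refine le_trans (norm_add_le _ _) ?_
  rw [norm_smul, norm_smul, Real.norm_eq_abs, Real.norm_eq_abs, abs_of_nonneg ha,
    abs_of_nonneg hb]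
  gcongr
  · exact hu
  · exact hv

lemma socTail_socAbs {n : ℕ} (x : EuclideanSpace ℝ (Fin (n + 1)))
    (hx : socTail x ≠ 0) :
    socTail (socAbs x)
      = (((|x 0 + ‖socTail x‖| - |x 0 - ‖socTail x‖|) / 2) / ‖socTail x‖) • socTail x := by
  ext i
  have h2 : (Fin.succ i : Fin (n + 1)) ≠ 0 := Fin.succ_ne_zero i
  rw [socAbs, if_neg hx]
  simp only [socTail, socAbs, hx, if_false, PiLp.smul_apply, smul_eq_mul, h2, if_neg,
    ite_false]
  ring

lemma socAbs_head {n : ℕ} (x : EuclideanSpace ℝ (Fin (n + 1))) (hx : socTail x ≠ 0) :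
    socAbs x 0 = (|x 0 - ‖socTail x‖| + |x 0 + ‖socTail x‖|) / 2 := by
  simp [socAbs, hx]

lemma socTail_zero_apply {n : ℕ} (x : EuclideanSpace ℝ (Fin (n + 1)))
    (hx : socTail x = 0) (i : Fin n) : x i.succ = 0 := by
  have := congrArg (fun v => v i) hx
  simpa [socTail] using this

lemma mem_A {n : ℕ} (x : EuclideanSpace ℝ (Fin (n + 1))) : x + socAbs x ∈ soc n := by
  by_cases hx : socTail x = 0
  · show ‖socTail (x + socAbs x)‖ ≤ (x + socAbs x) 0
    have htail : socTail (x + socAbs x) = 0 := by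
      ext i
      have h1 := socTail_zero_apply x hx i
      have h2 : (Fin.succ i : Fin (n + 1)) ≠ 0 := Fin.succ_ne_zero i
      rw [socAbs, if_pos hx]
      simp [socTail, socAbs, hx, h2, h1]
    rw [htail]
    have h0 : (x + socAbs x) 0 = x 0 + |x 0| := by simp [socAbs, hx]
    rw [h0]
    simp only [norm_zero]
    linarith [neg_abs_le (x 0)]
  · set t := ‖socTail x‖ with ht
    have htpos : 0 < t := norm_pos_iff.mpr hx
    set a := x 0 - t with ha
    set b := x 0 + t with hb
    show ‖socTail (x + socAbs x)‖ ≤ (x + socAbs x) 0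
    have htail : socTail (x + socAbs x) = (1 + ((|b| - |a|) / 2) / t) • socTail x := by
      ext i
      have h2 : (Fin.succ i : Fin (n + 1)) ≠ 0 := Fin.succ_ne_zero i
      rw [socAbs, if_neg hx, ← ht, ← ha, ← hb]
      simp only [socTail, socAbs, hx, if_false, PiLp.add_apply, PiLp.smul_apply,
        smul_eq_mul, h2, ite_false, ← ht, ← ha, ← hb]
      field_simp
    have h0 : (x + socAbs x) 0 = x 0 + (|a| + |b|) / 2 := by
      have hh := socAbs_head x hx
      simp only [PiLp.add_apply, hh, ← ht, ← ha, ← hb]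
    rw [htail, h0, norm_smul, Real.norm_eq_abs, ← ht]
    have key : |1 + ((|b| - |a|) / 2) / t| * t = |t + (|b| - |a|) / 2| := by
      rw [← abs_of_pos htpos, ← abs_mul, abs_of_pos htpos]
      congr 1
      field_simp
    rw [key, abs_le]
    constructor <;>
      rcases abs_cases a with ⟨h1, h2⟩ | ⟨h1, h2⟩ <;>
      rcases abs_cases b with ⟨h3, h4⟩ | ⟨h3, h4⟩ <;>
      rw [h1, h3] <;> linarith

lemma mem_B {n : ℕ} (x : EuclideanSpace ℝ (Fin (n + 1))) : socAbs x - x ∈ soc n := by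
  by_cases hx : socTail x = 0
  · show ‖socTail (socAbs x - x)‖ ≤ (socAbs x - x) 0
    have htail : socTail (socAbs x - x) = 0 := by
      ext i
      have h1 := socTail_zero_apply x hx i
      have h2 : (Fin.succ i : Fin (n + 1)) ≠ 0 := Fin.succ_ne_zero i
      rw [socAbs, if_pos hx]
      simp [socTail, socAbs, hx, h2, h1]
    rw [htail]
    have h0 : (socAbs x - x) 0 = |x 0| - x 0 := by simp [socAbs, hx]
    rw [h0]
    simp only [norm_zero]
    linarith [le_abs_self (x 0)]
  · set t := ‖socTail x‖ with ht
    have htpos : 0 < t := norm_pos_iff.mpr hx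
    set a := x 0 - t with ha
    set b := x 0 + t with hb
    show ‖socTail (socAbs x - x)‖ ≤ (socAbs x - x) 0
    have htail : socTail (socAbs x - x) = (((|b| - |a|) / 2) / t - 1) • socTail x := by
      ext i
      have h2 : (Fin.succ i : Fin (n + 1)) ≠ 0 := Fin.succ_ne_zero i
      rw [socAbs, if_neg hx, ← ht, ← ha, ← hb]
      simp only [socTail, socAbs, hx, if_false, PiLp.sub_apply, PiLp.smul_apply,
        smul_eq_mul, h2, ite_false, ← ht, ← ha, ← hb]
      field_simp
    have h0 : (socAbs x - x) 0 = (|a| + |b|) / 2 - x 0 := by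
      have hh := socAbs_head x hx
      simp only [PiLp.sub_apply, hh, ← ht, ← ha, ← hb]
    rw [htail, h0, norm_smul, Real.norm_eq_abs, ← ht]
    have key : |((|b| - |a|) / 2) / t - 1| * t = |(|b| - |a|) / 2 - t| := by
      rw [← abs_of_pos htpos, ← abs_mul, abs_of_pos htpos]
      congr 1
      field_simp
    rw [key]
    rw [abs_le]
    constructor <;>
      rcases abs_cases a with ⟨h1, h2⟩ | ⟨h1, h2⟩ <;>
      rcases abs_cases b with ⟨h3, h4⟩ | ⟨h3, h4⟩ <;>
      rw [h1, h3] <;> linarith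

lemma normsq_socAbs {n : ℕ} (x : EuclideanSpace ℝ (Fin (n + 1))) :
    ‖socAbs x‖ ^ 2 = ‖x‖ ^ 2 := by
  by_cases hx : socTail x = 0
  · rw [norm_sq_split, norm_sq_split x]
    have htail0 : socTail (socAbs x) = 0 := by
      ext i
      have h2 : (Fin.succ i : Fin (n + 1)) ≠ 0 := Fin.succ_ne_zero i
      rw [socAbs, if_pos hx]
      simp [socTail, socAbs, hx, h2]
    rw [htail0, hx]
    have h0 : socAbs x 0 = |x 0| := by simp [socAbs, hx]
    rw [h0, sq_abs]
  · set t := ‖socTail x‖ with ht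
    have htpos : 0 < t := norm_pos_iff.mpr hx
    set a := x 0 - t with ha
    set b := x 0 + t with hb
    rw [norm_sq_split, norm_sq_split x, socTail_socAbs x hx, socAbs_head x hx, norm_smul,
      Real.norm_eq_abs, ← ht, ← ha, ← hb]
    have hsq : (|((|b| - |a|) / 2) / t| * t) ^ 2 = ((|b| - |a|) / 2) ^ 2 := by
      rw [mul_pow, sq_abs]
      field_simp
    rw [hsq]
    have hab : a ^ 2 + b ^ 2 = 2 * ((x 0) ^ 2 + t ^ 2) := by rw [ha, hb]; ring
    nlinarith [sq_abs a, sq_abs b, hab]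

lemma proj_unique {F : Type*} [NormedAddCommGroup F] [InnerProductSpace ℝ F]
    {K : Set F} (hK : Convex ℝ K) {z p c : F} (hp : p ∈ K)
    (hmin : ∀ y ∈ K, dist z p ≤ dist z y) (hc : c ∈ K)
    (hci : ∀ y ∈ K, ⟪z - c, y - c⟫ ≤ 0) : p = c := by
  have hbdd : BddBelow (Set.range fun w : K => ‖z - (w : F)‖) := by
    refine ⟨0, ?_⟩
    rintro r ⟨w, rfl⟩
    exact norm_nonneg _
  haveI : Nonempty K := ⟨⟨p, hp⟩⟩
  have hinf : ‖z - p‖ = ⨅ w : K, ‖z - (w : F)‖ :=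
    le_antisymm (le_ciInf fun w => by simpa [dist_eq_norm] using hmin w w.2)
      (ciInf_le hbdd ⟨p, hp⟩)
  have hpi := (norm_eq_iInf_iff_real_inner_le_zero hK hp).1 hinf
  have h1 := hpi c hc
  have h2 := hci p hp
  have e1 := inner_sub_left (𝕜 := ℝ) (z - p) (z - c) (c - p)
  have e2 : (z - p) - (z - c) = c - p := by abel
  rw [e2] at e1
  have e3 : ⟪z - c, c - p⟫ = -⟪z - c, p - c⟫ := by
    rw [← inner_neg_right]
    congr 1
    abel
  have key : ⟪c - p, c - p⟫ ≤ 0 := by rw [e1, e3]; linarith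
  have h4 : c - p = 0 := real_inner_self_nonpos.mp key
  have h5 : c = p := sub_eq_zero.mp h4
  exact h5.symm

/-- If `P` is the metric projection onto the second-order cone (i.e. `P z` is a nearest
point of `K` to `z`, for every `z`), then `P (2x) = x + |x|` for every `x`, where `|·|`
is the SOC absolute value. -/
theorem soc_projection_two_smul (n : ℕ)
    (P : EuclideanSpace ℝ (Fin (n + 1)) → EuclideanSpace ℝ (Fin (n + 1)))
    (hP : ∀ z, P z ∈ soc n ∧ ∀ y ∈ soc n, dist z (P z) ≤ dist z y)
    (x : EuclideanSpace ℝ (Fin (n + 1))) :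
    P ((2 : ℝ) • x) = x + socAbs x := by
  obtain ⟨hPm, hPmin⟩ := hP ((2 : ℝ) • x)
  have hc : x + socAbs x ∈ soc n := mem_A x
  have hci : ∀ y ∈ soc n, ⟪(2 : ℝ) • x - (x + socAbs x), y - (x + socAbs x)⟫ ≤ 0 := by
    intro y hy
    have hzc : (2 : ℝ) • x - (x + socAbs x) = x - socAbs x := by
      rw [two_smul]; abel
    rw [hzc, inner_sub_right]
    have horth : ⟪x - socAbs x, x + socAbs x⟫ = 0 := by
      rw [inner_sub_left, inner_add_right, inner_add_right,
        real_inner_self_eq_norm_sq, real_inner_self_eq_norm_sq,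
        real_inner_comm x (socAbs x)]
      have := normsq_socAbs x
      linarith
    have h2 : ⟪x - socAbs x, y⟫ ≤ 0 := by
      have hneg : x - socAbs x = -(socAbs x - x) := by abel
      rw [hneg, inner_neg_left]
      have := soc_selfdual (mem_B x) hy
      linarith
    linarith
  exact proj_unique (soc_convex n) hPm hPmin hc hci
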